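/- Under the pseudo-weight setup, for every t ≥ 1 the total pseudo-weight satisfies W̃_t := Σ_{I ∈ 𝓘} w̃_t(I) ≤ t · (log₂(t) + 1). (Only intervals in 𝓘 with left endpoint at most t contribute a nonzero pseudo-weight, so the sum is finite.) -/

import Mathlib

open scoped BigOperators

/-- The geometric interval family `𝓘`, as a set of pairs `(q, s)` representing the
integer interval `[q, s]`: `(q,s) ∈ 𝓘` iff `q = i·2^k` and `s = (i+1)·2^k − 1` for
some `k ≥ 0` and `i ≥ 1`. -/
def geoSet : Set (ℕ × ℕ) :=
  {p | ∃ k i : ℕ, 1 ≤ i ∧ p.1 = i * 2 ^ k ∧ p.2 = (i + 1) * 2 ^ k - 1}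

/-- `η_I = min{1/2, 1/√|I|}` for the interval `I = [q,s]` (of size `s − q + 1`). -/
noncomputable def eta (p : ℕ × ℕ) : ℝ :=
  min (1 / 2) (1 / Real.sqrt ((p.2 - p.1 + 1 : ℕ) : ℝ))

/-- The pseudo-weights `w̃_t(I)` for `I = [q,s]`, given instantaneous regrets `r`:
`w̃_t(I) = 0` for `t < q`; `w̃_q(I) = 1`;
`w̃_t(I) = w̃_{t−1}(I)·(1 + η_I·r_{t−1}(I))` for `q < t ≤ s + 1`; and
`w̃_t(I) = w̃_{s+1}(I)` for `t > s + 1`.  (The indicator in the recursion below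
makes the last two cases coincide, since `t − 1 ∈ I` exactly when `q < t ≤ s + 1`.) -/
noncomputable def wtilde (r : ℕ → ℕ × ℕ → ℝ) (p : ℕ × ℕ) : ℕ → ℝ
  | 0 => if p.1 = 0 then 1 else 0
  | (t + 1) =>
    if t + 1 < p.1 then 0
    else if t + 1 = p.1 then 1
    else wtilde r p t * (1 + eta p * (if p.1 ≤ t ∧ t ≤ p.2 then r t p else 0))

/-- The weights `w_t(I) = η_I · w̃_t(I)` if `t ∈ I`, and `w_t(I) = 0` otherwise. -/
noncomputable def wfun (r : ℕ → ℕ × ℕ → ℝ) (p : ℕ × ℕ) (t : ℕ) : ℝ :=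
  if p.1 ≤ t ∧ t ≤ p.2 then eta p * wtilde r p t else 0

/-!
Written additively, the update of a started interval is `w̃_{t+1}(I) = w̃_t(I) + w_t(I) r_t(I)`,
so by the balance condition the total pseudo-weight changes from `t` to `t + 1` only by the
intervals starting at `t + 1`, each entering with weight `1`. An interval of `𝓘` starting at `q`
has size `2^k ≤ q`, so at most `⌊log₂ q⌋ + 1` of them start at `q`, and
`W̃_t ≤ Σ_{q ≤ t} (⌊log₂ q⌋ + 1) ≤ t (log₂ t + 1)`.
-/

lemma exists_pow_of_mem_geoSet {p : ℕ × ℕ} (hp : p ∈ geoSet) :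
    ∃ k, 2 ^ k ≤ p.1 ∧ p.2 = p.1 + 2 ^ k - 1 := by
  obtain ⟨k, i, hi, h1, h2⟩ := hp
  refine ⟨k, h1 ▸ Nat.le_mul_of_pos_left _ hi, ?_⟩
  rw [h2, h1, add_one_mul]

lemma one_le_fst_of_mem_geoSet {p : ℕ × ℕ} (hp : p ∈ geoSet) : 1 ≤ p.1 := by
  obtain ⟨k, hk, -⟩ := exists_pow_of_mem_geoSet hp
  exact (Nat.one_le_two_pow).trans hk

lemma snd_lt_two_mul_fst_of_mem_geoSet {p : ℕ × ℕ} (hp : p ∈ geoSet) : p.2 < 2 * p.1 := by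
  obtain ⟨k, hk, h2⟩ := exists_pow_of_mem_geoSet hp
  have := Nat.one_le_two_pow (n := k)
  omega

/-- Only finitely many intervals of `𝓘` start at or before `n`. -/
lemma summable_of_eq_zero_of_lt_fst {f : geoSet → ℝ} (n : ℕ)
    (hf : ∀ p : geoSet, n < p.1.1 → f p = 0) : Summable f := by
  refine summable_of_hasFiniteSupport ?_
  have hfin : (Subtype.val ⁻¹' (Set.Iic n ×ˢ Set.Iic (2 * n)) : Set geoSet).Finite :=
    ((Set.finite_Iic n).prod (Set.finite_Iic _)).preimage Subtype.val_injective.injOn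
  refine hfin.subset fun p hp => ?_
  have hn : p.1.1 ≤ n := not_lt.mp fun h => hp (hf p h)
  have := snd_lt_two_mul_fst_of_mem_geoSet p.2
  exact ⟨hn, by simp only [Set.mem_Iic]; omega⟩

lemma tsum_ite_fst_eq_le_natLog (q : ℕ) :
    ∑' p : geoSet, (if p.1.1 = q then (1 : ℝ) else 0) ≤ Nat.log 2 q + 1 := by
  classical
  set s : Finset (ℕ × ℕ) := (Finset.range (Nat.log 2 q + 1)).image fun k => (q, q + 2 ^ k - 1)
  have hs : ∀ p ∉ s.subtype (· ∈ geoSet), (if p.1.1 = q then (1 : ℝ) else 0) = 0 := by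
    intro p hp
    refine if_neg fun hpq => hp ?_
    obtain ⟨k, hk, h2⟩ := exists_pow_of_mem_geoSet p.2
    rw [Finset.mem_subtype, Finset.mem_image]
    refine ⟨k, Finset.mem_range_succ_iff.mpr (Nat.le_log_of_pow_le one_lt_two (hpq ▸ hk)), ?_⟩
    rw [Prod.ext_iff, h2, hpq]
    exact ⟨rfl, rfl⟩
  calc ∑' p : geoSet, (if p.1.1 = q then (1 : ℝ) else 0)
      = ∑ p ∈ s.subtype (· ∈ geoSet), (if p.1.1 = q then (1 : ℝ) else 0) := tsum_eq_sum hs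
    _ ≤ ∑ _p ∈ s.subtype (· ∈ geoSet), (1 : ℝ) :=
        Finset.sum_le_sum fun _ _ => by split_ifs <;> norm_num
    _ ≤ Nat.log 2 q + 1 := by
        rw [Finset.sum_const, nsmul_one, Finset.card_subtype]
        exact_mod_cast (Finset.card_filter_le _ _).trans (Finset.card_image_le.trans (by simp))

section PseudoWeights

variable (r : ℕ → ℕ × ℕ → ℝ)

lemma wtilde_eq_zero_of_lt {p : ℕ × ℕ} {t : ℕ} (ht : t < p.1) : wtilde r p t = 0 := by
  cases t with
  | zero => simp only [wtilde, if_neg ht.ne']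
  | succ t => simp only [wtilde, if_pos ht]

lemma wfun_eq_zero_of_lt {p : ℕ × ℕ} {t : ℕ} (ht : t < p.1) : wfun r p t = 0 :=
  if_neg fun h => (not_le.mpr ht) h.1

lemma wtilde_succ (p : ℕ × ℕ) (t : ℕ) :
    wtilde r p (t + 1) = wtilde r p t + wfun r p t * r t p + if p.1 = t + 1 then 1 else 0 := by
  rcases lt_trichotomy (t + 1) p.1 with h | h | h
  · rw [wtilde_eq_zero_of_lt r h, wtilde_eq_zero_of_lt r (by omega : t < p.1),
      wfun_eq_zero_of_lt r (by omega : t < p.1), if_neg h.ne']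
    ring
  · rw [wtilde_eq_zero_of_lt r (by omega : t < p.1), wfun_eq_zero_of_lt r (by omega : t < p.1),
      if_pos h.symm]
    simp only [wtilde, h, lt_irrefl, ↓reduceIte]
    ring
  · simp only [wtilde, wfun, if_neg (not_lt.mpr h.le), if_neg h.ne, if_neg h.ne']
    split_ifs <;> ring

lemma tsum_wfun_mul_eq_zero
    (hbal : ∀ t : ℕ, 1 ≤ t → ∑' p : geoSet, wfun r (p : ℕ × ℕ) t * r t (p : ℕ × ℕ) = 0)
    (t : ℕ) : ∑' p : geoSet, wfun r p t * r t p = 0 := by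
  rcases Nat.eq_zero_or_pos t with rfl | ht
  · refine (tsum_congr fun p => ?_).trans tsum_zero
    rw [wfun_eq_zero_of_lt r (one_le_fst_of_mem_geoSet p.2), zero_mul]
  · exact hbal t ht

lemma tsum_wtilde_succ (t : ℕ) :
    ∑' p : geoSet, wtilde r p (t + 1) =
      ∑' p : geoSet, wtilde r p t + ∑' p : geoSet, wfun r p t * r t p +
        ∑' p : geoSet, (if p.1.1 = t + 1 then (1 : ℝ) else 0) := by
  have hw : Summable fun p : geoSet => wtilde r p t :=
    summable_of_eq_zero_of_lt_fst t fun p h => wtilde_eq_zero_of_lt r h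
  have hwr : Summable fun p : geoSet => wfun r p t * r t p :=
    summable_of_eq_zero_of_lt_fst t fun p h => by rw [wfun_eq_zero_of_lt r h, zero_mul]
  have hstart : Summable fun p : geoSet => if p.1.1 = t + 1 then (1 : ℝ) else 0 :=
    summable_of_eq_zero_of_lt_fst (t + 1) fun p h => if_neg h.ne'
  rw [← hw.tsum_add hwr, ← (hw.add hwr).tsum_add hstart]
  exact tsum_congr fun p => wtilde_succ r p t

lemma tsum_wtilde_le_sum_natLog
    (hbal : ∀ t : ℕ, 1 ≤ t → ∑' p : geoSet, wfun r (p : ℕ × ℕ) t * r t (p : ℕ × ℕ) = 0)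
    (t : ℕ) : ∑' p : geoSet, wtilde r p t ≤ ∑ q ∈ Finset.Icc 1 t, ((Nat.log 2 q : ℝ) + 1) := by
  induction t with
  | zero =>
    rw [tsum_congr fun p => wtilde_eq_zero_of_lt r (one_le_fst_of_mem_geoSet p.2), tsum_zero]
    simp
  | succ t ih =>
    rw [tsum_wtilde_succ, tsum_wfun_mul_eq_zero r hbal, add_zero,
      Finset.sum_Icc_succ_top (by omega)]
    exact add_le_add ih (tsum_ite_fst_eq_le_natLog (t + 1))

end PseudoWeights

lemma sum_Icc_natLog_add_one_le {b : ℕ} (hb : 1 < b) (t : ℕ) :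
    ∑ q ∈ Finset.Icc 1 t, ((Nat.log b q : ℝ) + 1) ≤ t * (Real.logb b t + 1) := by
  have hb' : (1 : ℝ) < b := by exact_mod_cast hb
  calc ∑ q ∈ Finset.Icc 1 t, ((Nat.log b q : ℝ) + 1)
      ≤ ∑ _q ∈ Finset.Icc 1 t, (Real.logb b t + 1) := by
        refine Finset.sum_le_sum fun q hq => ?_
        have hq := Finset.mem_Icc.mp hq
        have hlog : Real.logb b q ≤ Real.logb b t :=
          Real.logb_le_logb_of_le hb' (by exact_mod_cast hq.1) (by exact_mod_cast hq.2)
        linarith [Real.natLog_le_logb q b]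
    _ = t * (Real.logb b t + 1) := by simp [mul_add]

theorem total_pseudo_weight_bound_general (r : ℕ → ℕ × ℕ → ℝ)
    (hbal : ∀ t : ℕ, 1 ≤ t → ∑' p : geoSet, wfun r (p : ℕ × ℕ) t * r t (p : ℕ × ℕ) = 0)
    (t : ℕ) :
    ∑' p : geoSet, wtilde r (p : ℕ × ℕ) t ≤ (t : ℝ) * (Real.logb 2 t + 1) := by
  exact_mod_cast (tsum_wtilde_le_sum_natLog r hbal t).trans (sum_Icc_natLog_add_one_le one_lt_two t)

/-- Under the pseudo-weight setup (with `r_t(I) ∈ [−1,1]` and the balance condition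
`Σ_{I ∈ 𝓘} w_t(I)·r_t(I) = 0`), for every `t ≥ 1` the total pseudo-weight satisfies
`W̃_t = Σ_{I ∈ 𝓘} w̃_t(I) ≤ t·(log₂ t + 1)`. -/
theorem total_pseudo_weight_bound (r : ℕ → ℕ × ℕ → ℝ)
    (hr : ∀ (t : ℕ) (p : ℕ × ℕ), p ∈ geoSet → -1 ≤ r t p ∧ r t p ≤ 1)
    (hbal : ∀ t : ℕ, 1 ≤ t → ∑' p : geoSet, wfun r (p : ℕ × ℕ) t * r t (p : ℕ × ℕ) = 0)
    (t : ℕ) (ht : 1 ≤ t) :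
    ∑' p : geoSet, wtilde r (p : ℕ × ℕ) t ≤ (t : ℝ) * (Real.logb 2 t + 1) :=
  total_pseudo_weight_bound_general r hbal t
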